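/- Let g(x) = (I−A)x + b in the fixed-point problem x = g(x), where A ∈ ℝ^{d×d} is symmetric positive definite and b ∈ ℝ^d. For the full-memory Type-I/Type-II AM with modified historical sequences, if the algorithm has not found the exact solution, then the coefficient vectors satisfy ζ_k^{(j)} = 0 for all j ≤ k−3 (when k ≥ 4) and Γ_k^{(j)} = 0 for all j ≤ k−2 (when k ≥ 3); that is, the method reduces to a short-term recurrence involving only the two most recent vector pairs. -/

import Mathlib

/-!
Since `r_j = b - A x_j`, the recurrences give `q_j = -A p_j` and
`r_{j+1} = r̄_j - β_j A r̄_j`, so `p_1, …, p_m` lie in the Krylov space `K_m(A, r_0)`.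
Both methods test against `v_j = M p_j`, with `M = 1` (Type I) or `M = -A` (Type II); `M` is
symmetric, commutes with `A`, and `⟪M u, u⟫`, `⟪M u, A u⟫` vanish only at `u = 0`.

Symmetry turns the one-sided conditions `⟪v_i, q_j⟫ = 0` (`i < j`) into biorthogonality of
`v` and `q`. If `p_{j+1} = 0`, then (as `β_j ≠ 0`) `r̄_j ∈ span(p_1, …, p_j)` is orthogonal to
`M r̄_j ∈ span(v_1, …, v_j)`, so `r̄_j = 0` and `r_{j+1} = 0`; hence as long as the residuals do
not vanish the diagonal `⟪v_j, q_j⟫` is nonzero, the `p_j` are independent and span exactly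
`K_m`, and `A v_j ∈ span(v_1, …, v_{j+1})`. Consequently
`⟪v_i, r_n⟫ = ⟪v_i, r̄_{n-1}⟫ - β_{n-1} ⟪A v_i, r̄_{n-1}⟫ = 0` for `i ≤ n - 2`, and pairing the
equations defining `Γ_k` and `ζ_k` with `v_i` leaves only `Γ_k^{(i)} ⟪v_i, q_i⟫` and
`ζ_k^{(i)} ⟪v_i, q_i⟫`.
-/

open scoped InnerProductSpace
open Finset Matrix

noncomputable section

/-- Euclidean space `ℝ^d`. -/
abbrev E (d : ℕ) := EuclideanSpace ℝ (Fin d)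

/-- Matrix–vector multiplication on Euclidean space. -/
def mvE {d m : ℕ} (A : Matrix (Fin d) (Fin m) ℝ) (u : E m) : E d :=
  Matrix.toEuclideanLin A u

open Module

section Spans

variable (K : Type*) {V : Type*} [Field K] [AddCommGroup V] [Module K V]

def spanUpTo (p : ℕ → V) (m : ℕ) : Submodule K V :=
  Submodule.span K (Set.range fun i : Fin m => p (1 + i))

variable {K} {p : ℕ → V} {m n j : ℕ}

theorem mem_spanUpTo (h1 : 1 ≤ j) (h2 : j ≤ m) : p j ∈ spanUpTo K p m :=
  Submodule.subset_span ⟨⟨j - 1, by omega⟩, by simp only; congr 1; omega⟩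

theorem spanUpTo_le {S : Submodule K V} (h : ∀ j, 1 ≤ j → j ≤ m → p j ∈ S) :
    spanUpTo K p m ≤ S :=
  Submodule.span_le.2 <| by rintro _ ⟨i, rfl⟩; exact h _ (by omega) (by omega)

theorem spanUpTo_mono (h : m ≤ n) : spanUpTo K p m ≤ spanUpTo K p n :=
  spanUpTo_le fun _ h1 h2 => mem_spanUpTo h1 (h2.trans h)

theorem sum_smul_mem_spanUpTo (c : ℕ → K) (h : n ≤ m) :
    ∑ i ∈ range n, c i • p (1 + i) ∈ spanUpTo K p m :=
  Submodule.sum_mem _ fun i hi =>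
    Submodule.smul_mem _ _ (mem_spanUpTo (by omega) (by rw [mem_range] at hi; omega))

theorem apply_mem_spanUpTo {v : ℕ → V} (M : V →ₗ[K] V) (hv : ∀ j, 1 ≤ j → v j = M (p j))
    {u : V} (hu : u ∈ spanUpTo K p m) : M u ∈ spanUpTo K v m :=
  spanUpTo_le (S := (spanUpTo K v m).comap M)
    (fun j h1 h2 => by rw [Submodule.mem_comap, ← hv j h1]; exact mem_spanUpTo h1 h2) hu

theorem finrank_spanUpTo (h : LinearIndependent K fun i : Fin m => p (1 + i)) :
    finrank K (spanUpTo K p m) = m := by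
  rw [spanUpTo, finrank_span_eq_card h, Fintype.card_fin]

theorem sum_smul_eq_neg_apply_sum {L : V →ₗ[K] V} {q : ℕ → V} (c : ℕ → K)
    (hq : ∀ j, 1 ≤ j → j ≤ n → q j = -L (p j)) :
    ∑ i ∈ range n, c i • q (1 + i) = -L (∑ i ∈ range n, c i • p (1 + i)) := by
  rw [map_sum, ← sum_neg_distrib]
  refine sum_congr rfl fun i hi => ?_
  rw [mem_range] at hi
  rw [hq (1 + i) (by omega) (by omega), map_smul, smul_neg]

def krylov (L : V →ₗ[K] V) (u : V) (m : ℕ) : Submodule K V :=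
  Submodule.span K (Set.range fun i : Fin m => (L ^ (i : ℕ)) u)

variable {L : V →ₗ[K] V} {u w : V}

instance : FiniteDimensional K (krylov L u m) :=
  FiniteDimensional.span_of_finite K (Set.finite_range _)

theorem pow_apply_mem_krylov {i : ℕ} (h : i < m) : (L ^ i) u ∈ krylov L u m :=
  Submodule.subset_span ⟨⟨i, h⟩, rfl⟩

theorem self_mem_krylov_one : u ∈ krylov L u 1 :=
  pow_apply_mem_krylov (L := L) zero_lt_one

theorem krylov_mono (h : m ≤ n) : krylov L u m ≤ krylov L u n :=
  Submodule.span_le.2 <| by rintro _ ⟨i, rfl⟩; exact pow_apply_mem_krylov (by omega)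

theorem apply_mem_krylov_succ (hw : w ∈ krylov L u m) : L w ∈ krylov L u (m + 1) := by
  refine (Submodule.span_le (p := (krylov L u (m + 1)).comap L)).2 ?_ hw
  rintro _ ⟨i, rfl⟩
  rw [SetLike.mem_coe, Submodule.mem_comap, ← End.mul_apply, ← pow_succ']
  exact pow_apply_mem_krylov (by omega)

theorem finrank_krylov_le : finrank K (krylov L u m) ≤ m :=
  (finrank_range_le_card (R := K) fun i : Fin m => (L ^ (i : ℕ)) u).trans_eq
    (Fintype.card_fin m)

theorem spanUpTo_eq_krylov_of_linearIndependent (hle : spanUpTo K p m ≤ krylov L u m)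
    (hp : LinearIndependent K fun i : Fin m => p (1 + i)) : spanUpTo K p m = krylov L u m :=
  Submodule.eq_of_le_of_finrank_le hle (finrank_krylov_le.trans (finrank_spanUpTo hp).ge)

end Spans

section InnerProduct

variable {F : Type*} [NormedAddCommGroup F] [InnerProductSpace ℝ F]

theorem inner_eq_zero_of_mem_spanUpTo {p : ℕ → F} {m : ℕ} {u w : F}
    (hw : ∀ j, 1 ≤ j → j ≤ m → ⟪p j, w⟫_ℝ = 0) (hu : u ∈ spanUpTo ℝ p m) : ⟪u, w⟫_ℝ = 0 := by
  have hle : spanUpTo ℝ p m ≤ (ℝ ∙ w)ᗮ := spanUpTo_le fun j h1 h2 => by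
    rw [Submodule.mem_orthogonal_singleton_iff_inner_right, real_inner_comm]
    exact hw j h1 h2
  rw [real_inner_comm]
  exact Submodule.mem_orthogonal_singleton_iff_inner_right.1 (hle hu)

theorem linearIndependent_of_inner_eq_zero_of_ne {ι : Type*} {v w : ι → F}
    (h0 : Pairwise fun i j => ⟪v i, w j⟫_ℝ = 0) (h1 : ∀ i, ⟪v i, w i⟫_ℝ ≠ 0) :
    LinearIndependent ℝ w := by
  rw [linearIndependent_iff']
  intro s g hg i hi
  have hpair := congrArg (inner ℝ (v i)) hg
  rw [inner_sum, inner_zero_right, sum_eq_single i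
    (fun j _ hji => by rw [real_inner_smul_right, h0 hji.symm, mul_zero])
    (fun h => absurd hi h), real_inner_smul_right] at hpair
  exact (mul_eq_zero.1 hpair).resolve_right (h1 i)

structure IsTestOperator (L M : F →ₗ[ℝ] F) : Prop where
  isSymmetric : M.IsSymmetric
  commute : Commute L M
  inner_self_ne_zero : ∀ u ≠ 0, ⟪M u, u⟫_ℝ ≠ 0
  inner_apply_ne_zero : ∀ u ≠ 0, ⟪M u, L u⟫_ℝ ≠ 0

variable {L M : F →ₗ[ℝ] F}

theorem IsTestOperator.inner_apply_comm (hL : L.IsSymmetric) (hM : IsTestOperator L M)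
    (u w : F) : ⟪M u, L w⟫_ℝ = ⟪M w, L u⟫_ℝ := by
  rw [hM.isSymmetric, ← End.mul_apply, ← hM.commute.eq, End.mul_apply, ← hL,
    real_inner_comm]

theorem isTestOperator_one (hpos : ∀ u ≠ 0, 0 < ⟪u, L u⟫_ℝ) : IsTestOperator L 1 where
  isSymmetric := LinearMap.IsSymmetric.one
  commute := Commute.one_right L
  inner_self_ne_zero _ hu := inner_self_ne_zero.2 hu
  inner_apply_ne_zero u hu := (hpos u hu).ne'

theorem isTestOperator_neg (hL : L.IsSymmetric) (hpos : ∀ u ≠ 0, 0 < ⟪u, L u⟫_ℝ) :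
    IsTestOperator L (-L) where
  isSymmetric u w := by simp only [LinearMap.neg_apply, inner_neg_left, inner_neg_right, hL u w]
  commute := (Commute.refl L).neg_right
  inner_self_ne_zero u hu := by
    rw [LinearMap.neg_apply, inner_neg_left, neg_ne_zero, hL]
    exact (hpos u hu).ne'
  inner_apply_ne_zero u hu := by
    rw [LinearMap.neg_apply, inner_neg_left, neg_ne_zero, inner_self_ne_zero]
    rintro hLu
    exact (hpos u hu).ne' (by rw [hLu, inner_zero_right])

theorem IsTestOperator.eq_zero_of_mem_spanUpTo (hM : IsTestOperator L M) {p v : ℕ → F}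
    (hv : ∀ j, 1 ≤ j → v j = M (p j)) {m : ℕ} {u : F} (hu : u ∈ spanUpTo ℝ p m)
    (horth : ∀ i, 1 ≤ i → i ≤ m → ⟪v i, u⟫_ℝ = 0) : u = 0 := by
  by_contra hne
  exact hM.inner_self_ne_zero u hne
    (inner_eq_zero_of_mem_spanUpTo horth (apply_mem_spanUpTo M hv hu))

def rbar (r q : ℕ → F) (Γ : ℕ → ℕ → ℝ) (j : ℕ) : F :=
  r j - ∑ l ∈ range j, Γ j l • q (1 + l)

theorem rbar_zero (r q : ℕ → F) (Γ : ℕ → ℕ → ℝ) : rbar r q Γ 0 = r 0 := by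
  simp [rbar]

/-- `v j` is the `j`-th column of `V_k`; coefficients are `0`-indexed, `Γ k i = Γ_k^{(i+1)}`. -/
structure IsModifiedAM (L : F →ₗ[ℝ] F) (b : F) (β : ℕ → ℝ) (x r p q v : ℕ → F)
    (ζ Γ : ℕ → ℕ → ℝ) : Prop where
  residual : ∀ j, r j = b - L (x j)
  x_one : x 1 = x 0 + β 0 • r 0
  p_one : p 1 = x 1 - x 0
  q_one : q 1 = r 1 - r 0
  p_eq : ∀ j, 2 ≤ j → p j = (x j - x (j - 1)) - ∑ i ∈ range (j - 1), ζ j i • p (1 + i)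
  q_eq : ∀ j, 2 ≤ j → q j = (r j - r (j - 1)) - ∑ i ∈ range (j - 1), ζ j i • q (1 + i)
  inner_q : ∀ j, 2 ≤ j → ∀ i < j - 1, ⟪v (1 + i), q j⟫_ℝ = 0
  inner_rbar : ∀ j, 1 ≤ j → ∀ i < j, ⟪v (1 + i), rbar r q Γ j⟫_ℝ = 0
  x_succ : ∀ j, 1 ≤ j →
    x (j + 1) = (x j - ∑ l ∈ range j, Γ j l • p (1 + l)) + β j • rbar r q Γ j

namespace IsModifiedAM

variable {b : F} {β : ℕ → ℝ} {x r p q v : ℕ → F} {ζ Γ : ℕ → ℕ → ℝ} {i j k n : ℕ}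
  (h : IsModifiedAM L b β x r p q v ζ Γ)
include h

theorem r_sub_r (a c : ℕ) : r a - r c = -L (x a - x c) := by
  rw [h.residual, h.residual, map_sub]
  abel

theorem q_eq_neg_apply : ∀ j, 1 ≤ j → q j = -L (p j) := by
  intro j
  induction j using Nat.strong_induction_on with
  | _ j ih =>
    intro hj
    obtain rfl | hj2 : j = 1 ∨ 2 ≤ j := by omega
    · rw [h.q_one, h.p_one, h.r_sub_r]
    · rw [h.q_eq j hj2, h.p_eq j hj2, h.r_sub_r,
        sum_smul_eq_neg_apply_sum _ fun i h1 _ => ih i (by omega) h1]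
      simp only [map_sub]
      abel

theorem sum_smul_q (c : ℕ → ℝ) (n : ℕ) :
    ∑ i ∈ range n, c i • q (1 + i) = -L (∑ i ∈ range n, c i • p (1 + i)) :=
  sum_smul_eq_neg_apply_sum c fun j h1 _ => h.q_eq_neg_apply j h1

theorem r_succ (j : ℕ) : r (j + 1) = rbar r q Γ j - β j • L (rbar r q Γ j) := by
  rcases Nat.eq_zero_or_pos j with rfl | hj
  · rw [rbar_zero, h.residual, h.x_one, map_add, map_smul, h.residual 0]
    abel
  · rw [h.residual, h.x_succ j hj, map_add, map_sub, map_smul, rbar, h.sum_smul_q, h.residual j]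
    abel

theorem beta_smul_rbar_sub_p_mem (j : ℕ) :
    β j • rbar r q Γ j - p (j + 1) ∈ spanUpTo ℝ p j := by
  rcases Nat.eq_zero_or_pos j with rfl | hj
  · rw [rbar_zero, h.p_one, h.x_one, add_sub_cancel_left, sub_self]
    exact zero_mem _
  · have hdiff : β j • rbar r q Γ j - p (j + 1) =
        ∑ l ∈ range j, Γ j l • p (1 + l) + ∑ i ∈ range j, ζ (j + 1) i • p (1 + i) := by
      rw [h.p_eq (j + 1) (by omega), Nat.add_sub_cancel, h.x_succ j hj]
      abel
    rw [hdiff]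
    exact add_mem (sum_smul_mem_spanUpTo _ le_rfl) (sum_smul_mem_spanUpTo _ le_rfl)

theorem rbar_mem_krylov_and_spanUpTo_le (j : ℕ) :
    rbar r q Γ j ∈ krylov L (r 0) (j + 1) ∧ spanUpTo ℝ p j ≤ krylov L (r 0) j := by
  induction j with
  | zero => exact ⟨by rw [rbar_zero]; exact self_mem_krylov_one, spanUpTo_le fun _ _ _ => by omega⟩
  | succ j ih =>
    obtain ⟨hrbar, hP⟩ := ih
    have hp : p (j + 1) ∈ krylov L (r 0) (j + 1) := by
      rw [← sub_sub_cancel (β j • rbar r q Γ j) (p (j + 1))]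
      exact sub_mem (Submodule.smul_mem _ _ hrbar)
        (krylov_mono j.le_succ (hP (h.beta_smul_rbar_sub_p_mem j)))
    have hP' : spanUpTo ℝ p (j + 1) ≤ krylov L (r 0) (j + 1) := spanUpTo_le fun i h1 h2 => by
      obtain h2 | rfl := Nat.lt_or_eq_of_le h2
      · exact krylov_mono (by omega) (hP (mem_spanUpTo h1 (by omega)))
      · exact hp
    refine ⟨?_, hP'⟩
    have hrbar' : rbar r q Γ (j + 1) = rbar r q Γ j - β j • L (rbar r q Γ j)
        + L (∑ l ∈ range (j + 1), Γ (j + 1) l • p (1 + l)) := by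
      rw [rbar, h.r_succ, h.sum_smul_q, sub_neg_eq_add]
    rw [hrbar']
    exact add_mem (sub_mem (krylov_mono (by omega) hrbar)
      (Submodule.smul_mem _ _ (apply_mem_krylov_succ hrbar)))
      (apply_mem_krylov_succ (hP' (sum_smul_mem_spanUpTo _ le_rfl)))

theorem spanUpTo_le_krylov (m : ℕ) : spanUpTo ℝ p m ≤ krylov L (r 0) m :=
  (h.rbar_mem_krylov_and_spanUpTo_le m).2

theorem inner_v_rbar_eq_zero (h1 : 1 ≤ i) (h2 : i ≤ j) : ⟪v i, rbar r q Γ j⟫_ℝ = 0 := by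
  have := h.inner_rbar j (by omega) (i - 1) (by omega)
  rwa [show 1 + (i - 1) = i by omega] at this

theorem inner_v_q_eq_zero_of_lt (h1 : 1 ≤ i) (h2 : i < j) : ⟪v i, q j⟫_ℝ = 0 := by
  have := h.inner_q j (by omega) (i - 1) (by omega)
  rwa [show 1 + (i - 1) = i by omega] at this

section TestOperator

variable (hM : IsTestOperator L M) (hv : ∀ j, 1 ≤ j → v j = M (p j))
include hM hv

theorem inner_v_q_self_ne_zero (hj : 1 ≤ j) (hp : p j ≠ 0) : ⟪v j, q j⟫_ℝ ≠ 0 := by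
  rw [hv j hj, h.q_eq_neg_apply j hj, inner_neg_right, neg_ne_zero]
  exact hM.inner_apply_ne_zero _ hp

theorem p_succ_ne_zero (hβ : β j ≠ 0) (hr : r (j + 1) ≠ 0) : p (j + 1) ≠ 0 := by
  intro hp
  have hmem : rbar r q Γ j ∈ spanUpTo ℝ p j := by
    have := h.beta_smul_rbar_sub_p_mem j
    rwa [hp, sub_zero, Submodule.smul_mem_iff _ hβ] at this
  have hzero := hM.eq_zero_of_mem_spanUpTo hv hmem fun i h1 h2 => h.inner_v_rbar_eq_zero h1 h2
  exact hr (by rw [h.r_succ, hzero, map_zero, smul_zero, sub_zero])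

theorem p_ne_zero (hβ : ∀ j, β j ≠ 0) (hr : ∀ j ≤ n, r j ≠ 0) (h1 : 1 ≤ j) (h2 : j ≤ n) :
    p j ≠ 0 := by
  obtain ⟨i, rfl⟩ : ∃ i, j = i + 1 := ⟨j - 1, by omega⟩
  exact h.p_succ_ne_zero hM hv (hβ i) (hr _ h2)

variable (hL : L.IsSymmetric)
include hL

theorem inner_v_q_comm (hi : 1 ≤ i) (hj : 1 ≤ j) : ⟪v i, q j⟫_ℝ = ⟪v j, q i⟫_ℝ := by
  rw [hv i hi, hv j hj, h.q_eq_neg_apply i hi, h.q_eq_neg_apply j hj, inner_neg_right,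
    inner_neg_right, hM.inner_apply_comm hL]

theorem inner_v_q_eq_zero (hi : 1 ≤ i) (hj : 1 ≤ j) (hij : i ≠ j) : ⟪v i, q j⟫_ℝ = 0 := by
  rcases hij.lt_or_gt with hij | hij
  · exact h.inner_v_q_eq_zero_of_lt hi hij
  · rw [h.inner_v_q_comm hM hv hL hi hj]
    exact h.inner_v_q_eq_zero_of_lt hj hij

theorem inner_v_sum_smul_q (c : ℕ → ℝ) (hi : i < n) :
    ⟪v (1 + i), ∑ l ∈ range n, c l • q (1 + l)⟫_ℝ = c i * ⟪v (1 + i), q (1 + i)⟫_ℝ := by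
  rw [inner_sum, sum_eq_single i (fun l _ hli => by
      rw [real_inner_smul_right, h.inner_v_q_eq_zero hM hv hL (by omega) (by omega) (by omega),
        mul_zero])
    (fun hi' => absurd (mem_range.2 hi) hi'), real_inner_smul_right]

variable (hβ : ∀ j, β j ≠ 0)
include hβ

theorem linearIndependent_p (hr : ∀ j ≤ n, r j ≠ 0) :
    LinearIndependent ℝ fun i : Fin n => p (1 + i) := by
  have hq : (fun i : Fin n => q (1 + i)) = (-L) ∘ fun i : Fin n => p (1 + i) :=
    funext fun i => h.q_eq_neg_apply _ (by omega)
  refine LinearIndependent.of_comp (-L) (hq ▸ linearIndependent_of_inner_eq_zero_of_ne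
    (v := fun i : Fin n => v (1 + i)) (fun i j hij => ?_) fun i => ?_)
  · exact h.inner_v_q_eq_zero hM hv hL (by omega) (by omega) (by omega)
  · exact h.inner_v_q_self_ne_zero hM hv (by omega) (h.p_ne_zero hM hv hβ hr (by omega) (by omega))

theorem apply_v_mem_spanUpTo (hr : ∀ i ≤ j + 1, r i ≠ 0) (hj : 1 ≤ j) :
    L (v j) ∈ spanUpTo ℝ v (j + 1) := by
  have hP : spanUpTo ℝ p (j + 1) = krylov L (r 0) (j + 1) :=
    spanUpTo_eq_krylov_of_linearIndependent (h.spanUpTo_le_krylov _)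
      (h.linearIndependent_p hM hv hL hβ hr)
  have hLp : L (p j) ∈ spanUpTo ℝ p (j + 1) :=
    hP ▸ apply_mem_krylov_succ (h.spanUpTo_le_krylov j (mem_spanUpTo hj le_rfl))
  rw [hv j hj, ← End.mul_apply, hM.commute.eq, End.mul_apply]
  exact apply_mem_spanUpTo M hv hLp

theorem inner_v_r_eq_zero (hr : ∀ j ≤ n, r j ≠ 0) (h1 : 1 ≤ i) (h2 : i + 2 ≤ n) :
    ⟪v i, r n⟫_ℝ = 0 := by
  obtain ⟨m, rfl⟩ : ∃ m, n = m + 1 := ⟨n - 1, by omega⟩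
  have hLv : L (v i) ∈ spanUpTo ℝ v m := spanUpTo_mono (by omega)
    (h.apply_v_mem_spanUpTo hM hv hL hβ (fun j hj => hr j (by omega)) h1)
  rw [h.r_succ, inner_sub_right, real_inner_smul_right, ← hL,
    inner_eq_zero_of_mem_spanUpTo (fun j h1 h2 => h.inner_v_rbar_eq_zero h1 h2) hLv,
    h.inner_v_rbar_eq_zero h1 (by omega), mul_zero, sub_zero]

theorem Γ_eq_zero (hr : ∀ j ≤ k, r j ≠ 0) (hi : i + 3 ≤ k) : Γ k i = 0 := by
  have hk := h.inner_rbar k (by omega) i (by omega)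
  rw [rbar, inner_sub_right, h.inner_v_r_eq_zero hM hv hL hβ hr (by omega) (by omega),
    h.inner_v_sum_smul_q hM hv hL _ (by omega), zero_sub, neg_eq_zero] at hk
  exact (mul_eq_zero.1 hk).resolve_right
    (h.inner_v_q_self_ne_zero hM hv (by omega) (h.p_ne_zero hM hv hβ hr (by omega) (by omega)))

theorem ζ_eq_zero (hr : ∀ j ≤ k, r j ≠ 0) (hi : i + 4 ≤ k) : ζ k i = 0 := by
  have hk := h.inner_q k (by omega) i (by omega)
  rw [h.q_eq k (by omega), inner_sub_right, inner_sub_right,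
    h.inner_v_r_eq_zero hM hv hL hβ hr (by omega) (by omega),
    h.inner_v_r_eq_zero hM hv hL hβ (fun j hj => hr j (by omega)) (by omega) (by omega),
    h.inner_v_sum_smul_q hM hv hL _ (by omega), sub_zero, zero_sub, neg_eq_zero] at hk
  exact (mul_eq_zero.1 hk).resolve_right
    (h.inner_v_q_self_ne_zero hM hv (by omega) (h.p_ne_zero hM hv hβ hr (by omega) (by omega)))

end TestOperator

end IsModifiedAM

end InnerProduct

/-- Proposition 6.1 of the paper.  For the linear fixed-point
problem `g(x) = (I-A)x + b` with `A` symmetric positive definite, the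
full-memory Type-I/Type-II AM with modified historical sequences
(`m_k = k`; residual `r_j = b - A x_j`; `p_1 = Δx_0`, `q_1 = Δr_0`;
`p_k = Δx_{k-1} - P_{k-1} ζ_k`, `q_k = Δr_{k-1} - Q_{k-1} ζ_k` with
`q_k ⊥ range(V_{k-1})`; `x_{k+1} = x̄_k + β_k r̄_k` with `r̄_k = r_k - Q_k Γ_k ⊥
range(V_k)`) satisfies, as long as the exact solution has not been found,
`ζ_k^{(j)} = 0` for `j ≤ k-3` (`k ≥ 4`) and `Γ_k^{(j)} = 0` for `j ≤ k-2`
(`k ≥ 3`); i.e. the method has a short-term recurrence.  (Coefficients are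
`0`-indexed below: `ζ_k^{(j)} = ζ k (j-1)`, `Γ_k^{(j)} = Γ k (j-1)`.) -/
theorem stmt_12 {d : ℕ} (A : Matrix (Fin d) (Fin d) ℝ) (b : E d)
    (hsymm : Aᵀ = A)
    (hpd : ∀ y : E d, y ≠ 0 → 0 < ⟪y, mvE A y⟫_ℝ)
    (typeII : Bool) (β : ℕ → ℝ) (hβ : ∀ j, β j ≠ 0)
    (x : ℕ → E d) (r : ℕ → E d) (hr : ∀ j, r j = b - mvE A (x j))
    (p q : ℕ → E d) (ζ Γ : ℕ → ℕ → ℝ)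
    (h0 : x 1 = x 0 + β 0 • r 0)
    (hpair1 : p 1 = x 1 - x 0 ∧ q 1 = r 1 - r 0)
    (hpair : ∀ j, 2 ≤ j →
      p j = (x j - x (j - 1)) - ∑ i ∈ Finset.range (j - 1), ζ j i • p (1 + i) ∧
      q j = (r j - r (j - 1)) - ∑ i ∈ Finset.range (j - 1), ζ j i • q (1 + i) ∧
      ∀ i < j - 1, ⟪(if typeII then q (1 + i) else p (1 + i)), q j⟫_ℝ = 0)
    (horth : ∀ j, 1 ≤ j → ∀ i < j,
      ⟪(if typeII then q (1 + i) else p (1 + i)),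
        r j - ∑ l ∈ Finset.range j, Γ j l • q (1 + l)⟫_ℝ = 0)
    (hupdate : ∀ j, 1 ≤ j →
      x (j + 1) = (x j - ∑ l ∈ Finset.range j, Γ j l • p (1 + l))
        + β j • (r j - ∑ l ∈ Finset.range j, Γ j l • q (1 + l))) :
    ∀ k : ℕ, (∀ j ≤ k, r j ≠ 0) →
      (4 ≤ k → ∀ i : ℕ, i + 1 ≤ k - 3 → ζ k i = 0) ∧
      (3 ≤ k → ∀ i : ℕ, i + 1 ≤ k - 2 → Γ k i = 0) := by
  set L := Matrix.toEuclideanLin A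
  have hL : L.IsSymmetric := Matrix.isSymmetric_toEuclideanLin_iff.2
    ((Matrix.conjTranspose_eq_transpose_of_trivial A).trans hsymm)
  have h : IsModifiedAM L b β x r p q (fun j => if typeII then q j else p j) ζ Γ :=
    { residual := hr, x_one := h0, p_one := hpair1.1, q_one := hpair1.2
      p_eq := fun j hj => (hpair j hj).1, q_eq := fun j hj => (hpair j hj).2.1
      inner_q := fun j hj => (hpair j hj).2.2, inner_rbar := horth, x_succ := hupdate }
  obtain ⟨M, hM, hv⟩ : ∃ M, IsTestOperator L M ∧
      ∀ j, 1 ≤ j → (if typeII then q j else p j) = M (p j) := by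
    cases typeII
    · exact ⟨1, isTestOperator_one hpd, fun j _ => rfl⟩
    · exact ⟨-L, isTestOperator_neg hL hpd, h.q_eq_neg_apply⟩
  intro k hk
  exact ⟨fun _ i hi => h.ζ_eq_zero hM hv hL hβ hk (by omega),
    fun _ i hi => h.Γ_eq_zero hM hv hL hβ hk (by omega)⟩

end
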